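/- arXiv:1804.08645 — 11 statements merged into one kernel-verified Lean document; each statement's English description precedes it below -/
import Mathlib

section
/- For any reals x_1, ..., x_n (n ≥ 2), the variance of the first n−1 entries satisfies Var(x_1,...,x_{n-1}) ≤ (n/(n−1)) · Var(x_1,...,x_n). -/
/-- Mean of a finite multiset of reals (0 for the empty multiset). -/
noncomputable def mMean (s : Multiset ℝ) : ℝ := s.sum / (Multiset.card s : ℝ)

/-- Variance of a finite multiset of reals (0 for the empty multiset). -/
noncomputable def mVar (s : Multiset ℝ) : ℝ :=
  ((s.map (fun x => (x - mMean s) ^ 2)).sum) / (Multiset.card s : ℝ)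

/-! Removing an entry cannot increase the sum of squared deviations: the smaller sample's own
mean minimises its squared deviations, so they are at most its squared deviations from the mean
of the full sample, which are part of the full sample's sum. Dividing by the sizes `n - 1` and `n`
gives the factor `n / (n - 1)`. -/

lemma sum_map_sub_sq (t : Multiset ℝ) (c : ℝ) :
    (t.map fun x => (x - c) ^ 2).sum
      = (t.map fun x => x ^ 2).sum - 2 * c * t.sum + Multiset.card t * c ^ 2 := by
  induction t using Multiset.induction with
  | empty => simp
  | cons a s ih =>
    simp only [Multiset.map_cons, Multiset.sum_cons, Multiset.card_cons, ih]
    push_cast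
    ring

lemma card_mul_mMean (t : Multiset ℝ) : Multiset.card t * mMean t = t.sum := by
  rcases eq_or_ne t 0 with rfl | ht
  · simp
  · exact mul_div_cancel₀ _ (by simpa using ht)

lemma card_mul_mVar (t : Multiset ℝ) :
    Multiset.card t * mVar t = (t.map fun x => (x - mMean t) ^ 2).sum := by
  rcases eq_or_ne t 0 with rfl | ht
  · simp
  · exact mul_div_cancel₀ _ (by simpa using ht)

lemma sum_map_sub_sq_eq_add (t : Multiset ℝ) (c : ℝ) :
    (t.map fun x => (x - c) ^ 2).sum
      = (t.map fun x => (x - mMean t) ^ 2).sum + Multiset.card t * (mMean t - c) ^ 2 := by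
  rw [sum_map_sub_sq, sum_map_sub_sq, ← card_mul_mMean t]
  ring

lemma sum_map_sub_mMean_sq_le (t : Multiset ℝ) (c : ℝ) :
    (t.map fun x => (x - mMean t) ^ 2).sum ≤ (t.map fun x => (x - c) ^ 2).sum := by
  rw [sum_map_sub_sq_eq_add t c]
  exact le_add_of_nonneg_right (by positivity)

lemma card_mul_mVar_le_of_le {s t : Multiset ℝ} (h : s ≤ t) :
    Multiset.card s * mVar s ≤ Multiset.card t * mVar t := by
  obtain ⟨u, rfl⟩ := Multiset.le_iff_exists_add.mp h
  rw [card_mul_mVar, card_mul_mVar]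
  calc (s.map fun x => (x - mMean s) ^ 2).sum
      ≤ (s.map fun x => (x - mMean (s + u)) ^ 2).sum := sum_map_sub_mMean_sq_le s _
    _ ≤ ((s + u).map fun x => (x - mMean (s + u)) ^ 2).sum := by
      rw [Multiset.map_add, Multiset.sum_add]
      exact le_add_of_nonneg_right (Multiset.sum_nonneg fun _ hy => by
        obtain ⟨y, -, rfl⟩ := Multiset.mem_map.mp hy
        positivity)

/-- For reals `x₁,…,xₙ` with `n ≥ 2`,
`Var(x₁,…,x_{n-1}) ≤ (n/(n-1)) · Var(x₁,…,xₙ)`. -/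
theorem stmt1 (n : ℕ) (hn : 2 ≤ n) (x : Fin n → ℝ) :
    mVar ((List.ofFn x).dropLast : Multiset ℝ)
      ≤ ((n : ℝ) / ((n : ℝ) - 1)) * mVar (List.ofFn x : Multiset ℝ) := by
  have hsub : ((List.ofFn x).dropLast : Multiset ℝ) ≤ (List.ofFn x : Multiset ℝ) :=
    Multiset.coe_le.mpr (List.dropLast_sublist _).subperm
  have key := card_mul_mVar_le_of_le hsub
  simp only [Multiset.coe_card, List.length_dropLast, List.length_ofFn,
    Nat.cast_sub (by omega : 1 ≤ n), Nat.cast_one] at key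
  have hpos : (0 : ℝ) < n - 1 := by
    have : (2 : ℝ) ≤ n := by exact_mod_cast hn
    linarith
  rw [div_mul_eq_mul_div, le_div_iff₀ hpos, mul_comm]
  exact key
end

section
/- For any reals x_1,...,x_n and any two distinct indices a ≠ b, the variance satisfies the identity: Var(D) = ((n−1)/n)² Var(D − x_a) + ((n−1)/n)² Var(D − x_b) − ((n−2)/n)² Var(D − x_a − x_b) + (1/n²)(x_a − x_b)², where D = (x_1,...,x_n). -/
open Multiset

theorem sq_card_mul_mVar (s : Multiset ℝ) :
    (card s : ℝ) ^ 2 * mVar s = card s * (s.map (· ^ 2)).sum - s.sum ^ 2 := by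
  rcases eq_or_ne s 0 with rfl | hs
  · simp
  have hcard : (card s : ℝ) ≠ 0 := by simpa using hs
  have hexpand : (s.map fun x => (x - mMean s) ^ 2).sum
      = (s.map (· ^ 2)).sum - 2 * mMean s * s.sum + card s * mMean s ^ 2 := by
    have hsq : (fun x => (x - mMean s) ^ 2) = fun x => x ^ 2 - 2 * mMean s * x + mMean s ^ 2 := by
      funext x; ring
    simp only [hsq, sum_map_add, sum_map_sub, map_const', sum_replicate, nsmul_eq_mul]
    rw [sum_map_mul_left, map_id']
  rw [mVar, hexpand, mMean]
  field_simp
  ring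

theorem sq_card_mul_mVar_cons_cons (p q : ℝ) (m : Multiset ℝ) :
    ((card m : ℝ) + 2) ^ 2 * mVar (p ::ₘ q ::ₘ m)
      = ((card m : ℝ) + 1) ^ 2 * mVar (q ::ₘ m) + ((card m : ℝ) + 1) ^ 2 * mVar (p ::ₘ m)
        - (card m : ℝ) ^ 2 * mVar m + (p - q) ^ 2 := by
  have hpq := sq_card_mul_mVar (p ::ₘ q ::ₘ m)
  have hq := sq_card_mul_mVar (q ::ₘ m)
  have hp := sq_card_mul_mVar (p ::ₘ m)
  have h := sq_card_mul_mVar m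
  simp only [card_cons, map_cons, sum_cons, Nat.cast_add, Nat.cast_one] at hpq hq hp
  linear_combination hpq - hq - hp + h

theorem mVar_cons_cons {n : ℕ} (p q : ℝ) (m : Multiset ℝ) (hn : card m + 2 = n) :
    mVar (p ::ₘ q ::ₘ m)
      = (((n : ℝ) - 1) / n) ^ 2 * mVar (q ::ₘ m) + (((n : ℝ) - 1) / n) ^ 2 * mVar (p ::ₘ m)
        - (((n : ℝ) - 2) / n) ^ 2 * mVar m + (1 / (n : ℝ) ^ 2) * (p - q) ^ 2 := by
  have hcast : (n : ℝ) = card m + 2 := by rw [← hn]; push_cast; ring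
  rw [hcast]
  field_simp
  linear_combination sq_card_mul_mVar_cons_cons p q m

theorem Finset.exists_val_eq_cons_cons {ι : Type*} [DecidableEq ι] {s : Finset ι} {a b : ι}
    (ha : a ∈ s) (hb : b ∈ s) (hab : a ≠ b) : ∃ t, s.val = a ::ₘ b ::ₘ t :=
  ⟨(s.val.erase a).erase b, by
    rw [cons_erase (mem_erase_of_ne hab.symm |>.mpr hb), cons_erase ha]⟩

theorem stmt3_general (n : ℕ) (x : Fin n → ℝ) (a b : Fin n) (hab : a ≠ b) :
    mVar (List.ofFn x : Multiset ℝ) =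
      (((n : ℝ) - 1) / n) ^ 2 * mVar ((List.ofFn x : Multiset ℝ).erase (x a))
      + (((n : ℝ) - 1) / n) ^ 2 * mVar ((List.ofFn x : Multiset ℝ).erase (x b))
      - (((n : ℝ) - 2) / n) ^ 2 * mVar (((List.ofFn x : Multiset ℝ).erase (x a)).erase (x b))
      + (1 / (n : ℝ) ^ 2) * (x a - x b) ^ 2 := by
  obtain ⟨t, ht⟩ := Finset.exists_val_eq_cons_cons (Finset.mem_univ a) (Finset.mem_univ b) hab
  have hD : (List.ofFn x : Multiset ℝ) = x a ::ₘ x b ::ₘ t.map x := by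
    rw [← Fin.univ_val_map, ht, map_cons, map_cons]
  have hcard : card (t.map x) + 2 = n := by
    simpa [eq_comm] using congrArg card ht
  rw [hD, erase_cons_head, cons_swap, erase_cons_head, erase_cons_head, cons_swap]
  exact mVar_cons_cons _ _ _ hcard

/-- The variance identity relating `Var(D)` to `Var(D − x_a)`, `Var(D − x_b)`,
`Var(D − x_a − x_b)` and `(x_a − x_b)²` for distinct indices `a ≠ b`. -/
theorem stmt3 (n : ℕ) (hn : 2 ≤ n) (x : Fin n → ℝ) (a b : Fin n) (hab : a ≠ b) :
    mVar (List.ofFn x : Multiset ℝ) =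
      (((n : ℝ) - 1) / n) ^ 2 * mVar ((List.ofFn x : Multiset ℝ).erase (x a))
      + (((n : ℝ) - 1) / n) ^ 2 * mVar ((List.ofFn x : Multiset ℝ).erase (x b))
      - (((n : ℝ) - 2) / n) ^ 2 * mVar (((List.ofFn x : Multiset ℝ).erase (x a)).erase (x b))
      + (1 / (n : ℝ) ^ 2) * (x a - x b) ^ 2 :=
  stmt3_general n x a b hab
end

section
/- For any reals x_1,...,x_n and any index a ∈ {1,...,n} with n ≥ 2, Var(x_1,...,x_n) − Var of the multiset obtained by removing x_a is at most (1/n²) ∑_{i=1}^n (x_a − x_i)². -/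
lemma key_ineq (N Q d e : ℝ) (hN : 2 ≤ N) (hQ : 0 ≤ Q) (hde : d = (N-1)*e)
    (hCS : N * d^2 ≤ (N-1) * Q) :
    Q/N - (Q + N*e^2 - (d+e)^2)/(N-1) ≤ 1/N^2 * (Q + N*d^2) := by
  have h1 : (0:ℝ) < N - 1 := by linarith
  have h0 : (0:ℝ) < N := by linarith
  have hkey : N*(N-1)*e^2 ≤ Q := by
    rw [hde] at hCS; nlinarith [hCS, h1]
  have hrw : 1/N^2 * (Q + N*d^2) = (Q + N*d^2)/N^2 := by ring
  rw [hrw, div_sub_div _ _ h0.ne' h1.ne', div_le_div_iff₀ (by positivity) (by positivity)]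
  subst hde
  nlinarith [mul_nonneg (by linarith : (0:ℝ) ≤ 2*N - 1) (by linarith : (0:ℝ) ≤ Q - N*(N-1)*e^2)]

/-- Removing one entry `x_a` decreases the variance by at most
`(1/n²) ∑ᵢ (x_a − xᵢ)²`. -/
theorem stmt4 (n : ℕ) (hn : 2 ≤ n) (x : Fin n → ℝ) (a : Fin n) :
    mVar (List.ofFn x : Multiset ℝ) - mVar ((List.ofFn x : Multiset ℝ).erase (x a))
      ≤ (1 / (n : ℝ) ^ 2) * ∑ i, (x a - x i) ^ 2 := by
  classical
  have hN2 : (2:ℝ) ≤ (n:ℝ) := by exact_mod_cast hn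
  have hN0 : (0:ℝ) < (n:ℝ) := by linarith
  have hN1 : (0:ℝ) < (n:ℝ) - 1 := by linarith
  set s : Multiset ℝ := (List.ofFn x : Multiset ℝ) with hs
  have hmem : x a ∈ s := by
    rw [hs]; simp [List.mem_ofFn]
  set t := s.erase (x a) with ht
  have hst : x a ::ₘ t = s := Multiset.cons_erase hmem
  have hcards : Multiset.card s = n := by simp [hs]
  have hcardt : Multiset.card t = n - 1 := by
    have := congrArg Multiset.card hst
    rw [Multiset.card_cons, hcards] at this
    omega
  have hcardtR : ((Multiset.card t : ℕ) : ℝ) = (n:ℝ) - 1 := by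
    rw [hcardt]; push_cast [Nat.cast_sub (by omega : 1 ≤ n)]; ring
  have hsum_map : ∀ f : ℝ → ℝ, (s.map f).sum = ∑ i, f (x i) := by
    intro f
    rw [hs]
    rw [show ((List.ofFn x : List ℝ) : Multiset ℝ).map f = ((List.ofFn x).map f : List ℝ) from
      Multiset.map_coe f _]
    rw [Multiset.sum_coe, List.map_ofFn, List.sum_ofFn]
    rfl
  have hsum_s : s.sum = ∑ i, x i := by
    have := hsum_map id
    simpa using this
  have hmap_t : ∀ f : ℝ → ℝ, (t.map f).sum = (∑ i, f (x i)) - f (x a) := by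
    intro f
    have h := congrArg (fun m => (Multiset.map f m).sum) hst
    simp only [Multiset.map_cons, Multiset.sum_cons] at h
    rw [hsum_map f] at h
    linarith
  have hsum_t : t.sum = (∑ i, x i) - x a := by
    have := hmap_t id
    simpa [hsum_s] using this
  set μ : ℝ := (∑ i, x i) / n with hμ
  set μ' : ℝ := ((∑ i, x i) - x a) / ((n:ℝ) - 1) with hμ'
  have hmeans : mMean s = μ := by rw [mMean, hsum_s, hcards]
  have hmeant : mMean t = μ' := by rw [mMean, hsum_t, hcardtR]
  set Q : ℝ := ∑ i, (x i - μ)^2 with hQdef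
  set d : ℝ := x a - μ with hd
  have hQ0 : 0 ≤ Q := Finset.sum_nonneg fun i _ => sq_nonneg _
  have hSμ : ∑ i, x i = (n:ℝ) * μ := by
    rw [hμ]; field_simp
  have hzero : ∑ i, (x i - μ) = 0 := by
    rw [Finset.sum_sub_distrib, hSμ]
    simp [Finset.card_univ, mul_comm]
  -- mVar formulas
  have hVs : mVar s = Q / n := by
    rw [mVar, hmeans, hsum_map, hcards]
  have hVt : mVar t = ((∑ i, (x i - μ')^2) - (x a - μ')^2) / ((n:ℝ) - 1) := by
    rw [mVar, hmeant, hmap_t, hcardtR]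
  -- expansion identities
  have hQ' : ∑ i, (x i - μ')^2 = Q + (n:ℝ) * (μ - μ')^2 := by
    have h : ∀ i : Fin n, (x i - μ')^2
        = (x i - μ)^2 + (2*(μ - μ'))*(x i - μ) + (μ - μ')^2 := by
      intro i; ring
    simp_rw [h]
    rw [Finset.sum_add_distrib, Finset.sum_add_distrib, ← Finset.mul_sum, hzero]
    simp [Finset.card_univ, hQdef]
  have hR : ∑ i, (x a - x i)^2 = Q + (n:ℝ) * d^2 := by
    have h : ∀ i : Fin n, (x a - x i)^2
        = (x i - μ)^2 + (-2*d)*(x i - μ) + d^2 := by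
      intro i; rw [hd]; ring
    simp_rw [h]
    rw [Finset.sum_add_distrib, Finset.sum_add_distrib, ← Finset.mul_sum, hzero]
    simp [Finset.card_univ, hQdef]
  -- relation between d and μ - μ'
  have hde : d = ((n:ℝ) - 1) * (μ - μ') := by
    rw [hd, hμ', hμ]
    field_simp
    ring
  -- Cauchy-Schwarz: n d² ≤ (n-1) Q
  have hCS : (n:ℝ) * d^2 ≤ ((n:ℝ) - 1) * Q := by
    have key := sq_sum_le_card_mul_sum_sq
      (s := Finset.univ.erase a) (f := fun i => x i - μ)
    have h1 : ∑ i ∈ Finset.univ.erase a, (x i - μ) = -d := by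
      have h := Finset.sum_erase_add Finset.univ (fun i => x i - μ) (Finset.mem_univ a)
      rw [hzero] at h
      rw [hd]; linarith
    have h2 : ∑ i ∈ Finset.univ.erase a, (x i - μ)^2 = Q - d^2 := by
      have h : (∑ i ∈ Finset.univ.erase a, (x i - μ)^2) + (x a - μ)^2 = Q := by
        rw [hQdef]; exact Finset.sum_erase_add _ _ (Finset.mem_univ a)
      rw [hd]; linarith
    have hcard : ((Finset.univ.erase a).card : ℝ) = (n:ℝ) - 1 := by
      rw [Finset.card_erase_of_mem (Finset.mem_univ a)]
      simp [Finset.card_univ]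
      push_cast [Nat.cast_sub (by omega : 1 ≤ n)]
      ring
    rw [h1, h2, hcard] at key
    nlinarith [key]
  rw [hVs, hVt, hQ', hR, show x a - μ' = d + (μ - μ') by rw [hd]; ring]
  exact key_ineq (n:ℝ) Q d (μ - μ') hN2 hQ0 hde hCS
end

section
/- Let x_1 ≤ x_2 ≤ ⋯ ≤ x_n be ordered reals with mean μ = (1/n)∑ x_i. Then for any index k ∈ {1,...,n}: (1/n²) ∑_{i=k}^n ∑_{j=1}^i (1/3)|x_i − x_j| ≤ (1/n) ∑_{i=k}^n |x_i − μ|. -/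
/-!
For `j ≤ i` the triangle inequality through the mean `μ` gives `|xᵢ - xⱼ| ≤ |xᵢ - μ| + |xⱼ - μ|`,
so the double sum is at most `n T + (n - k + 1) S`, where `T = ∑_{i ≥ k} |xᵢ - μ|` and
`S = ∑_i |xᵢ - μ|`. The deviations from the mean sum to zero, so `S` is twice the sum of the
positive parts `(xᵢ - μ)⁺`; these are monotone in `i`, so by Chebyshev's sum inequality the tail
`i ≥ k` carries at least the fraction `(n - k + 1) / n` of them. Hence `(n - k + 1) S ≤ 2 n T`
and the double sum is at most `3 n T`.
-/

open Finset

section General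

variable {ι α : Type*}

theorem sum_sub_sum_div_card_eq_zero [Field α] [CharZero α] {s : Finset ι} (hs : s.Nonempty)
    (f : ι → α) : ∑ i ∈ s, (f i - (∑ j ∈ s, f j) / #s) = 0 := by
  have hcard : (#s : α) ≠ 0 := by exact_mod_cast hs.card_ne_zero
  rw [sum_sub_distrib, sum_const, nsmul_eq_mul, mul_div_cancel₀ _ hcard, sub_self]

theorem sum_abs_eq_two_nsmul_sum_posPart [AddCommGroup α] [LinearOrder α] [IsOrderedAddMonoid α]
    {s : Finset ι} {f : ι → α} (hf : ∑ i ∈ s, f i = 0) :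
    ∑ i ∈ s, |f i| = 2 • ∑ i ∈ s, (f i)⁺ := by
  rw [← add_zero (∑ i ∈ s, |f i|), ← hf, ← sum_add_distrib, smul_sum]
  exact sum_congr rfl fun i _ => abs_add_eq_two_nsmul_posPart (f i)

theorem sum_abs_sub_le_card_nsmul_add_sum [AddCommGroup α] [LinearOrder α] [IsOrderedAddMonoid α]
    {s t : Finset ι} (hst : s ⊆ t) (f : ι → α) (a c : α) :
    ∑ j ∈ s, |a - f j| ≤ #s • |a - c| + ∑ j ∈ t, |f j - c| :=
  calc ∑ j ∈ s, |a - f j|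
      ≤ ∑ j ∈ s, (|a - c| + |f j - c|) :=
        sum_le_sum fun j _ => (abs_sub_le a c (f j)).trans_eq (by rw [abs_sub_comm c])
    _ = #s • |a - c| + ∑ j ∈ s, |f j - c| := by rw [sum_add_distrib, sum_const]
    _ ≤ #s • |a - c| + ∑ j ∈ t, |f j - c| := by gcongr

/-- Chebyshev's sum inequality against the indicator of `{i | a ≤ i}`. -/
theorem card_filter_mul_sum_le_card_mul_sum_filter [LinearOrder ι] [CommRing α] [LinearOrder α]
    [IsStrictOrderedRing α] {s : Finset ι} {f : ι → α} (hf : MonotoneOn f s) (a : ι) :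
    (#{i ∈ s | a ≤ i} : α) * ∑ i ∈ s, f i ≤ #s * ∑ i ∈ s with a ≤ i, f i := by
  have hfg : MonovaryOn f (fun i => if a ≤ i then (1 : α) else 0) s := by
    intro i hi j hj hij
    refine hf hi hj (le_of_lt ?_)
    simp only at hij
    split_ifs at hij with hai <;> norm_num at hij
    exact (not_le.1 hai).trans_le ‹a ≤ j›
  simpa [sum_ite, mul_comm] using hfg.sum_mul_sum_le_card_mul_sum

end General

section SortedSequence

variable {n k : ℕ} {x : ℕ → ℝ}

theorem sum_Icc_sum_Icc_abs_sub_le (c : ℝ) :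
    ∑ i ∈ Icc k n, ∑ j ∈ Icc 1 i, |x i - x j|
      ≤ n * ∑ i ∈ Icc k n, |x i - c| + #(Icc k n) * ∑ j ∈ Icc 1 n, |x j - c| :=
  calc ∑ i ∈ Icc k n, ∑ j ∈ Icc 1 i, |x i - x j|
      ≤ ∑ i ∈ Icc k n, (n * |x i - c| + ∑ j ∈ Icc 1 n, |x j - c|) := by
        refine sum_le_sum fun i hi => ?_
        have hin : i ≤ n := (mem_Icc.1 hi).2
        refine (sum_abs_sub_le_card_nsmul_add_sum (Icc_subset_Icc_right hin) x (x i) c).trans ?_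
        rw [nsmul_eq_mul, Nat.card_Icc, add_tsub_cancel_right]
        gcongr
    _ = n * ∑ i ∈ Icc k n, |x i - c| + #(Icc k n) * ∑ j ∈ Icc 1 n, |x j - c| := by
        rw [sum_add_distrib, mul_sum, sum_const, nsmul_eq_mul]

theorem card_Icc_mul_sum_abs_sub_le (hmono : ∀ i j, 1 ≤ i → i ≤ j → j ≤ n → x i ≤ x j)
    (hk : 1 ≤ k) {μ : ℝ} (hμ : ∑ j ∈ Icc 1 n, (x j - μ) = 0) :
    #(Icc k n) * ∑ j ∈ Icc 1 n, |x j - μ| ≤ 2 * n * ∑ i ∈ Icc k n, |x i - μ| := by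
  have hpos : MonotoneOn (fun j => (x j - μ)⁺) (Icc 1 n : Finset ℕ) := by
    intro i hi j hj hij
    simp only [coe_Icc, Set.mem_Icc] at hi hj
    exact posPart_mono (sub_le_sub_right (hmono i j hi.1 hij hj.2) μ)
  have htail : {j ∈ Icc 1 n | k ≤ j} = Icc k n := by
    ext j; simp only [mem_filter, mem_Icc]; omega
  have hcheb := card_filter_mul_sum_le_card_mul_sum_filter hpos k
  rw [htail, Nat.card_Icc 1 n, add_tsub_cancel_right] at hcheb
  calc (#(Icc k n) : ℝ) * ∑ j ∈ Icc 1 n, |x j - μ|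
      = 2 * (#(Icc k n) * ∑ j ∈ Icc 1 n, (x j - μ)⁺) := by
        rw [sum_abs_eq_two_nsmul_sum_posPart hμ, nsmul_eq_mul]; ring
    _ ≤ 2 * (n * ∑ i ∈ Icc k n, (x i - μ)⁺) := by gcongr
    _ ≤ 2 * n * ∑ i ∈ Icc k n, |x i - μ| := by
        rw [← mul_assoc]
        gcongr with i
        exact sup_le (le_abs_self _) (abs_nonneg _)

end SortedSequence

/-- For sorted reals `x₁ ≤ ⋯ ≤ xₙ` with mean `μ` and any index `k`,
`(1/n²) ∑_{i=k}^n ∑_{j=1}^i (1/3)|xᵢ − xⱼ| ≤ (1/n) ∑_{i=k}^n |xᵢ − μ|`. -/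
theorem stmt5 (n : ℕ) (x : ℕ → ℝ)
    (hmono : ∀ i j, 1 ≤ i → i ≤ j → j ≤ n → x i ≤ x j)
    (k : ℕ) (hk1 : 1 ≤ k) (hkn : k ≤ n) :
    (1 / (n : ℝ) ^ 2) * ∑ i ∈ Finset.Icc k n, ∑ j ∈ Finset.Icc 1 i, (1 / 3) * |x i - x j|
      ≤ (1 / (n : ℝ)) *
        ∑ i ∈ Finset.Icc k n, |x i - (∑ j ∈ Finset.Icc 1 n, x j) / (n : ℝ)| := by
  set μ := (∑ j ∈ Icc 1 n, x j) / (n : ℝ)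
  have hn : (0 : ℝ) < n := by exact_mod_cast hk1.trans hkn
  have hμ : ∑ j ∈ Icc 1 n, (x j - μ) = 0 := by
    simpa using sum_sub_sum_div_card_eq_zero (nonempty_Icc.2 (hk1.trans hkn)) x
  have hbound : ∑ i ∈ Icc k n, ∑ j ∈ Icc 1 i, |x i - x j| ≤ 3 * n * ∑ i ∈ Icc k n, |x i - μ| := by
    linarith [sum_Icc_sum_Icc_abs_sub_le (k := k) (n := n) (x := x) μ,
      card_Icc_mul_sum_abs_sub_le hmono hk1 hμ]
  calc (1 / (n : ℝ) ^ 2) * ∑ i ∈ Icc k n, ∑ j ∈ Icc 1 i, (1 / 3) * |x i - x j|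
      = (∑ i ∈ Icc k n, ∑ j ∈ Icc 1 i, |x i - x j|) / (3 * n ^ 2) := by
        simp only [← mul_sum]; field_simp
    _ ≤ (3 * n * ∑ i ∈ Icc k n, |x i - μ|) / (3 * n ^ 2) := by gcongr
    _ = (1 / (n : ℝ)) * ∑ i ∈ Icc k n, |x i - μ| := by field_simp
end

section
/- Let y_1,...,y_n be points in ℝ² and Δ_1,...,Δ_n nonnegative reals. If for every pair i, j the closed ℓ₁ balls B₁(y_i, Δ_i) and B₁(y_j, Δ_j) have nonempty intersection, then the intersection of all n balls ⋂_{i=1}^n B₁(y_i, Δ_i) is nonempty. -/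
/-- The closed ℓ₁ ball of radius `Δ` around `c` in `ℝ²`. -/
def l1Ball2 (c : ℝ × ℝ) (Δ : ℝ) : Set (ℝ × ℝ) :=
  {x | |x.1 - c.1| + |x.2 - c.2| ≤ Δ}

lemma l1_half_aux (p q D : ℝ) (hp : |p| ≤ D) (hq : |q| ≤ D) :
    |(p + q) / 2| + |(p - q) / 2| ≤ D := by
  rcases abs_cases p with ⟨hp1, hp2⟩ | ⟨hp1, hp2⟩ <;>
    rcases abs_cases q with ⟨hq1, hq2⟩ | ⟨hq1, hq2⟩ <;>
    rcases abs_cases ((p + q) / 2) with ⟨u1, u2⟩ | ⟨u1, u2⟩ <;>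
    rcases abs_cases ((p - q) / 2) with ⟨v1, v2⟩ | ⟨v1, v2⟩ <;>
    rw [u1, v1] <;> linarith

/-- Helly-type property for ℓ₁ balls in the plane: pairwise nonempty
intersection implies nonempty total intersection. -/
theorem stmt7 (n : ℕ) (y : Fin n → ℝ × ℝ) (Δ : Fin n → ℝ) (hΔ : ∀ i, 0 ≤ Δ i)
    (hpair : ∀ i j, (l1Ball2 (y i) (Δ i) ∩ l1Ball2 (y j) (Δ j)).Nonempty) :
    (⋂ i, l1Ball2 (y i) (Δ i)).Nonempty := by
  rcases Nat.eq_zero_or_pos n with hn | hn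
  · subst hn
    exact ⟨(0, 0), by simp⟩
  have : Nonempty (Fin n) := ⟨⟨0, hn⟩⟩
  set a : Fin n → ℝ := fun i => (y i).1 + (y i).2 with ha
  set b : Fin n → ℝ := fun i => (y i).1 - (y i).2 with hb
  have key : ∀ i j, |a i - a j| ≤ Δ i + Δ j ∧ |b i - b j| ≤ Δ i + Δ j := by
    intro i j
    obtain ⟨x, h1, h2⟩ := hpair i j
    simp only [l1Ball2, Set.mem_setOf_eq] at h1 h2
    have e1 := le_abs_self (x.1 - (y i).1)
    have e2 := neg_abs_le (x.1 - (y i).1)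
    have e3 := le_abs_self (x.2 - (y i).2)
    have e4 := neg_abs_le (x.2 - (y i).2)
    have f1 := le_abs_self (x.1 - (y j).1)
    have f2 := neg_abs_le (x.1 - (y j).1)
    have f3 := le_abs_self (x.2 - (y j).2)
    have f4 := neg_abs_le (x.2 - (y j).2)
    constructor <;> rw [abs_sub_le_iff] <;> constructor <;>
      simp only [ha, hb] <;> linarith
  -- 1D Helly for each rotated coordinate
  obtain ⟨i0, hi0⟩ := Finite.exists_max (fun i => a i - Δ i)
  obtain ⟨i1, hi1⟩ := Finite.exists_max (fun i => b i - Δ i)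
  set s := a i0 - Δ i0 with hs
  set t := b i1 - Δ i1 with ht
  have hsmem : ∀ j, a j - Δ j ≤ s ∧ s ≤ a j + Δ j := by
    intro j
    refine ⟨hi0 j, ?_⟩
    have := (key i0 j).1
    rw [abs_sub_le_iff] at this
    simp only [hs]; linarith [this.1]
  have htmem : ∀ j, b j - Δ j ≤ t ∧ t ≤ b j + Δ j := by
    intro j
    refine ⟨hi1 j, ?_⟩
    have := (key i1 j).2
    rw [abs_sub_le_iff] at this
    simp only [ht]; linarith [this.1]
  refine ⟨((s + t) / 2, (s - t) / 2), Set.mem_iInter.2 fun j => ?_⟩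
  simp only [l1Ball2, Set.mem_setOf_eq]
  obtain ⟨hs1, hs2⟩ := hsmem j
  obtain ⟨ht1, ht2⟩ := htmem j
  have hp : |s - a j| ≤ Δ j := by rw [abs_sub_le_iff]; constructor <;> linarith
  have hq : |t - b j| ≤ Δ j := by rw [abs_sub_le_iff]; constructor <;> linarith
  have h1 : (s + t) / 2 - (y j).1 = ((s - a j) + (t - b j)) / 2 := by
    simp only [ha, hb]; ring
  have h2 : (s - t) / 2 - (y j).2 = ((s - a j) - (t - b j)) / 2 := by
    simp only [ha, hb]; ring
  rw [h1, h2]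
  exact l1_half_aux _ _ _ hp hq
end

section
/- Let g be defined recursively on finite databases over a data universe 𝒟 (closed under taking subsets) by: g(∅) = f(∅), and for nonempty D, g(D) = Upper(D) if Upper(D) ≤ f(D), g(D) = Lower(D) if Lower(D) ≥ f(D), and g(D) = f(D) otherwise, where Upper(D) = min over entries x_j ∈ D of (g(D − x_j) + Δ_j) and Lower(D) = max over entries x_j ∈ D of (g(D − x_j) − Δ_j), with nonnegative parameters Δ_j. Then for every nonempty database D, Lower(D) ≤ Upper(D); consequently g is well-defined on all of 𝒟 and satisfies |g(D + x_i) − g(D)| ≤ Δ_i for every database D not containing x_i. -/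
variable {α : Type*} [DecidableEq α]

/-- The Sensitivity-Preprocessing Function of `f` with individual sensitivity
parameters `Δ`: `g ∅ = f ∅`, and for nonempty `D`, `g D = Upper D` if
`Upper D ≤ f D`, `g D = Lower D` if `Lower D ≥ f D`, and `g D = f D` otherwise,
where `Upper D = min_{a ∈ D} (g (D.erase a) + Δ a)` and
`Lower D = max_{a ∈ D} (g (D.erase a) - Δ a)`. -/
noncomputable def SPF (f : Finset α → ℝ) (Δ : α → ℝ) : Finset α → ℝ := fun D =>
  if h : D.Nonempty then
    let U : ℝ := D.attach.inf' (Finset.attach_nonempty_iff.mpr h)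
      (fun a => SPF f Δ (D.erase a.1) + Δ a.1)
    let L : ℝ := D.attach.sup' (Finset.attach_nonempty_iff.mpr h)
      (fun a => SPF f Δ (D.erase a.1) - Δ a.1)
    if U ≤ f D then U
    else if f D ≤ L then L
    else f D
  else f ∅
termination_by D => D.card
decreasing_by all_goals exact Finset.card_erase_lt_of_mem a.2

/-- `Upper D = min_{a ∈ D} (g (D.erase a) + Δ a)`. -/
noncomputable def SPFUpper (f : Finset α → ℝ) (Δ : α → ℝ) (D : Finset α)
    (hD : D.Nonempty) : ℝ :=
  D.attach.inf' (Finset.attach_nonempty_iff.mpr hD)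
    (fun a => SPF f Δ (D.erase a.1) + Δ a.1)

/-- `Lower D = max_{a ∈ D} (g (D.erase a) - Δ a)`. -/
noncomputable def SPFLower (f : Finset α → ℝ) (Δ : α → ℝ) (D : Finset α)
    (hD : D.Nonempty) : ℝ :=
  D.attach.sup' (Finset.attach_nonempty_iff.mpr hD)
    (fun a => SPF f Δ (D.erase a.1) - Δ a.1)


lemma SPF_unfold (f : Finset α → ℝ) (Δ : α → ℝ) (D : Finset α) (hD : D.Nonempty) :
    SPF f Δ D = if SPFUpper f Δ D hD ≤ f D then SPFUpper f Δ D hD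
      else if f D ≤ SPFLower f Δ D hD then SPFLower f Δ D hD else f D := by
  rw [SPF]
  simp [hD, SPFUpper, SPFLower]

lemma SPF_mem (f : Finset α → ℝ) (Δ : α → ℝ) (D : Finset α) (hD : D.Nonempty)
    (hLU : SPFLower f Δ D hD ≤ SPFUpper f Δ D hD) :
    SPFLower f Δ D hD ≤ SPF f Δ D ∧ SPF f Δ D ≤ SPFUpper f Δ D hD := by
  rw [SPF_unfold f Δ D hD]
  split_ifs with h1 h2
  · exact ⟨hLU, le_refl _⟩
  · exact ⟨le_refl _, hLU⟩
  · exact ⟨le_of_not_ge h2, le_of_not_ge h1⟩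

lemma SPF_LU (f : Finset α → ℝ) (Δ : α → ℝ) (hΔ : ∀ a, 0 ≤ Δ a) (D : Finset α)
    (hD : D.Nonempty)
    (hsens : ∀ (D' : Finset α) (a : α), D'.card + 2 ≤ D.card → a ∉ D' →
      |SPF f Δ (insert a D') - SPF f Δ D'| ≤ Δ a) :
    SPFLower f Δ D hD ≤ SPFUpper f Δ D hD := by
  apply Finset.sup'_le
  intro c _
  apply Finset.le_inf'
  intro b _
  rcases eq_or_ne b.1 c.1 with h | h
  · rw [h]
    have := hΔ c.1
    linarith
  · -- b ≠ c, both in D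
    set D' := (D.erase c.1).erase b.1 with hD'
    have hbD : b.1 ∈ D.erase c.1 := Finset.mem_erase.mpr ⟨h, b.2⟩
    have hcD : c.1 ∈ D.erase b.1 := Finset.mem_erase.mpr ⟨Ne.symm h, c.2⟩
    have hbD' : b.1 ∉ D' := Finset.notMem_erase _ _
    have hcD' : c.1 ∉ D' := by
      rw [hD', Finset.erase_right_comm]; exact Finset.notMem_erase _ _
    have hcard : D'.card + 2 ≤ D.card := by
      rw [hD', Finset.card_erase_of_mem hbD, Finset.card_erase_of_mem c.2]
      have h2 : 2 ≤ D.card := Finset.one_lt_card.mpr ⟨b.1, b.2, c.1, c.2, h⟩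
      omega
    have h1 := hsens D' b.1 hcard hbD'
    have h2 := hsens D' c.1 hcard hcD'
    rw [Finset.insert_erase hbD] at h1
    rw [hD', Finset.erase_right_comm, Finset.insert_erase hcD] at h2
    rw [abs_le] at h1 h2
    have := hΔ b.1; have := hΔ c.1
    have hD'' : D' = (D.erase b.1).erase c.1 := by
      rw [hD', Finset.erase_right_comm]
    rw [hD''] at h1
    linarith [h1.1, h1.2, h2.1, h2.2]

lemma SPF_sens (f : Finset α → ℝ) (Δ : α → ℝ) (hΔ : ∀ a, 0 ≤ Δ a) :
    ∀ (n : ℕ) (D : Finset α), D.card = n → ∀ a, a ∉ D →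
      |SPF f Δ (insert a D) - SPF f Δ D| ≤ Δ a := by
  intro n
  induction n using Nat.strong_induction_on with
  | _ n ih =>
    intro D hcard a ha
    have hE : (insert a D).Nonempty := Finset.insert_nonempty a D
    have haE : a ∈ insert a D := Finset.mem_insert_self a D
    have hLU : SPFLower f Δ (insert a D) hE ≤ SPFUpper f Δ (insert a D) hE := by
      apply SPF_LU f Δ hΔ
      intro D' b hc hb
      have hcardE : (insert a D).card = n + 1 := by
        rw [Finset.card_insert_of_notMem ha, hcard]
      exact ih D'.card (by omega) D' rfl b hb
    have herase : (insert a D).erase a = D := Finset.erase_insert ha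
    have hU : SPFUpper f Δ (insert a D) hE ≤ SPF f Δ D + Δ a := by
      have := Finset.inf'_le (fun b : {x // x ∈ insert a D} =>
        SPF f Δ ((insert a D).erase b.1) + Δ b.1)
        (Finset.mem_attach _ (⟨a, haE⟩ : {x // x ∈ insert a D}))
      rw [herase] at this
      exact this
    have hL : SPF f Δ D - Δ a ≤ SPFLower f Δ (insert a D) hE := by
      have := Finset.le_sup' (fun b : {x // x ∈ insert a D} =>
        SPF f Δ ((insert a D).erase b.1) - Δ b.1)
        (Finset.mem_attach _ (⟨a, haE⟩ : {x // x ∈ insert a D}))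
      rw [herase] at this
      exact this
    have hmem := SPF_mem f Δ (insert a D) hE hLU
    rw [abs_le]
    constructor <;> linarith [hmem.1, hmem.2]

/-- For nonnegative parameters, `Lower D ≤ Upper D` on every nonempty database,
and the Sensitivity-Preprocessing Function has individual sensitivity at most
`Δ a` with respect to each entry `a`. -/
theorem stmt11 (f : Finset α → ℝ) (Δ : α → ℝ) (hΔ : ∀ a, 0 ≤ Δ a) :
    (∀ (D : Finset α) (hD : D.Nonempty), SPFLower f Δ D hD ≤ SPFUpper f Δ D hD) ∧
    (∀ (D : Finset α) (a : α), a ∉ D →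
      |SPF f Δ (insert a D) - SPF f Δ D| ≤ Δ a) := by
  constructor
  · intro D hD
    apply SPF_LU f Δ hΔ D hD
    intro D' a _ ha
    exact SPF_sens f Δ hΔ D'.card D' rfl a ha
  · intro D a ha
    exact SPF_sens f Δ hΔ D.card D rfl a ha
end

section
/- Let g be the Sensitivity-Preprocessing Function of f: 𝒟 → ℝ with nonnegative parameters {Δ_i}. Then for any database D with n entries, |f(D) − g(D)| ≤ max over permutations σ of [n] of ∑_{i=1}^{n} max{ |f(D_{σ(<i)} + x_{σ(i)}) − f(D_{σ(<i)})| − Δ_{σ(i)}, 0 }, where D_{σ(<i)} = (x_{σ(1)},...,x_{σ(i−1)}) is the prefix of D under ordering σ. -/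
variable {α : Type*} [DecidableEq α]

/-!
If `g D` is clipped to `Upper D = g (D - b) + Δ b ≤ f D`, then
`f D - g D = (f D - f (D - b) - Δ b) + (f (D - b) - g (D - b))`, and symmetrically for
`Lower D`; otherwise `g D = f D`. Hence the error at `D` is at most the clipped increment of `f`
at the entry `b` plus the error at `D - b`, and strong induction on `D` produces an ordering
that lists `b` last.
-/

open Finset

namespace SPF

section Ordering

variable {n : ℕ}

/-- `D_{σ(<i)}` in the paper's notation, with the ordering `σ` given as `e`. -/
def prefixSet (e : Fin n → α) (i : Fin n) : Finset α :=
  image e (univ.filter fun j => j < i)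

def excessIncrement (f : Finset α → ℝ) (Δ : α → ℝ) (s : Finset α) (a : α) : ℝ :=
  max (|f (insert a s) - f s| - Δ a) 0

def chainExcess (f : Finset α → ℝ) (Δ : α → ℝ) (e : Fin n → α) : ℝ :=
  ∑ i, excessIncrement f Δ (prefixSet e i) (e i)

lemma excessIncrement_nonneg (f : Finset α → ℝ) (Δ : α → ℝ) (s : Finset α) (a : α) :
    0 ≤ excessIncrement f Δ s a :=
  le_max_right _ _

lemma prefixSet_snoc_castSucc (e : Fin n → α) (b : α) (i : Fin n) :
    prefixSet (Fin.snoc e b : Fin (n + 1) → α) i.castSucc = prefixSet e i := by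
  ext x
  simp [prefixSet, Fin.exists_fin_succ', (Fin.castSucc_lt_last i).not_gt]

lemma prefixSet_snoc_last (e : Fin n → α) (b : α) :
    prefixSet (Fin.snoc e b : Fin (n + 1) → α) (Fin.last n) = image e univ := by
  ext x
  simp [prefixSet, Fin.exists_fin_succ']

lemma chainExcess_snoc (f : Finset α → ℝ) (Δ : α → ℝ) (e : Fin n → α) (b : α) :
    chainExcess f Δ (Fin.snoc e b : Fin (n + 1) → α)
      = chainExcess f Δ e + excessIncrement f Δ (image e univ) b := by
  simp only [chainExcess, Fin.sum_univ_castSucc, prefixSet_snoc_castSucc, prefixSet_snoc_last,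
    Fin.snoc_castSucc, Fin.snoc_last]

lemma image_snoc_univ (e : Fin n → α) (b : α) :
    image (Fin.snoc e b : Fin (n + 1) → α) univ = insert b (image e univ) := by
  ext x
  simp [Fin.exists_fin_succ', or_comm, eq_comm]

end Ordering

variable (f : Finset α → ℝ) (Δ : α → ℝ)

lemma empty : SPF f Δ ∅ = f ∅ := by
  rw [SPF, dif_neg Finset.not_nonempty_empty]

lemma eq_self_or_exists_erase {D : Finset α} (hD : D.Nonempty) :
    SPF f Δ D = f D ∨ ∃ b ∈ D,
      (SPF f Δ D = SPF f Δ (D.erase b) + Δ b ∧ SPF f Δ D ≤ f D) ∨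
      (SPF f Δ D = SPF f Δ (D.erase b) - Δ b ∧ f D ≤ SPF f Δ D) := by
  have hatt := Finset.attach_nonempty_iff.mpr hD
  rw [SPF, dif_pos hD]
  dsimp only
  split_ifs with hU hL
  · obtain ⟨c, -, hc⟩ := exists_mem_eq_inf' hatt fun a => SPF f Δ (D.erase a.1) + Δ a.1
    exact .inr ⟨c, c.2, .inl ⟨hc, hc ▸ hU⟩⟩
  · obtain ⟨c, -, hc⟩ := exists_mem_eq_sup' hatt fun a => SPF f Δ (D.erase a.1) - Δ a.1
    exact .inr ⟨c, c.2, .inr ⟨hc, hc ▸ hL⟩⟩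
  · exact .inl rfl

lemma exists_mem_abs_sub_le {D : Finset α} (hD : D.Nonempty) :
    ∃ b ∈ D, |f D - SPF f Δ D| ≤
      |f (D.erase b) - SPF f Δ (D.erase b)| + excessIncrement f Δ (D.erase b) b := by
  rcases eq_self_or_exists_erase f Δ hD with hself | ⟨b, hb, hstep⟩
  · obtain ⟨b, hb⟩ := hD
    refine ⟨b, hb, ?_⟩
    rw [hself, sub_self, abs_zero]
    exact add_nonneg (abs_nonneg _) (excessIncrement_nonneg f Δ _ b)
  refine ⟨b, hb, ?_⟩
  have hexcess : |f D - f (D.erase b)| - Δ b ≤ excessIncrement f Δ (D.erase b) b := by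
    rw [excessIncrement, insert_erase hb]
    exact le_max_left _ _
  rcases hstep with ⟨hg, hle⟩ | ⟨hg, hle⟩
  · rw [abs_of_nonneg (sub_nonneg.mpr hle)]
    linarith [le_abs_self (f D - f (D.erase b)),
      le_abs_self (f (D.erase b) - SPF f Δ (D.erase b))]
  · rw [abs_of_nonpos (sub_nonpos.mpr hle)]
    linarith [neg_abs_le (f D - f (D.erase b)),
      neg_abs_le (f (D.erase b) - SPF f Δ (D.erase b))]

theorem exists_ordering_abs_sub_le (D : Finset α) :
    ∃ (n : ℕ) (e : Fin n → α), Function.Injective e ∧ image e univ = D ∧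
      |f D - SPF f Δ D| ≤ chainExcess f Δ e := by
  induction D using Finset.strongInduction with
  | H D ih =>
  rcases D.eq_empty_or_nonempty with rfl | hD
  · exact ⟨0, Fin.elim0, Function.injective_of_subsingleton _, by simp, by simp [empty, chainExcess]⟩
  obtain ⟨b, hb, hle⟩ := exists_mem_abs_sub_le f Δ hD
  obtain ⟨n, e, he, himg, hle'⟩ := ih (D.erase b) (erase_ssubset hb)
  refine ⟨n + 1, Fin.snoc e b, Fin.snoc_injective_iff.mpr ⟨he, ?_⟩, ?_, ?_⟩
  · rintro ⟨i, rfl⟩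
    have hi : e i ∈ D.erase (e i) := himg ▸ mem_image_of_mem e (mem_univ i)
    exact notMem_erase _ _ hi
  · rw [image_snoc_univ, himg, insert_erase hb]
  · rw [chainExcess_snoc, himg]
    linarith

end SPF

theorem stmt12_general (f : Finset α → ℝ) (Δ : α → ℝ) (D : Finset α) :
    ∃ e : Fin D.card → α, Function.Injective e ∧ Finset.image e Finset.univ = D ∧
      |f D - SPF f Δ D| ≤ ∑ i : Fin D.card,
        max (|f (insert (e i) (Finset.image e (Finset.univ.filter fun j => j < i)))
              - f (Finset.image e (Finset.univ.filter fun j => j < i))| - Δ (e i)) 0 := by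
  obtain ⟨n, e, he, himg, hle⟩ := SPF.exists_ordering_abs_sub_le f Δ D
  obtain rfl : n = D.card := by rw [← himg, card_image_of_injective _ he, card_fin]
  exact ⟨e, he, himg, hle⟩

/-- Error bound for the Sensitivity-Preprocessing Function: `|f D − g D|` is at
most the maximum, over orderings `e` of the entries of `D`, of the sum of the
clipped marginal changes of `f` along the corresponding chain of prefixes
(stated equivalently via an existential, since the maximum is attained). -/
theorem stmt12 (f : Finset α → ℝ) (Δ : α → ℝ) (hΔ : ∀ a, 0 ≤ Δ a) (D : Finset α) :
    ∃ e : Fin D.card → α, Function.Injective e ∧ Finset.image e Finset.univ = D ∧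
      |f D - SPF f Δ D| ≤ ∑ i : Fin D.card,
        max (|f (insert (e i) (Finset.image e (Finset.univ.filter fun j => j < i)))
              - f (Finset.image e (Finset.univ.filter fun j => j < i))| - Δ (e i)) 0 :=
  stmt12_general f Δ D
end

section
/- Let g be the Sensitivity-Preprocessing Function of f: 𝒟 → ℝ with parameters {Δ_i}. For any database D ∈ 𝒟, letting 𝒟' = { D' : D' ⊆ D }, we have max_{D' ∈ 𝒟'} |f(D') − g(D')| ≤ 2 · min over all functions f*: 𝒟' → ℝ with individual sensitivities at most Δ_i and f*(∅) arbitrary, of max_{D' ∈ 𝒟'} |f(D') − f*(D')|. In particular g is a 2-approximation in the ℓ∞ metric to the best {Δ_i}-sensitivity-bounded approximation of f on the subsets of D. -/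
variable {α : Type*} [DecidableEq α]

/-- The Sensitivity-Preprocessing Function is a 2-approximation in the ℓ∞
metric, on the subsets of any database `D`, to any function `fstar` whose
individual sensitivities (within `D`) are bounded by the parameters `Δ`. -/
theorem stmt14 (f : Finset α → ℝ) (Δ : α → ℝ) (hΔ : ∀ a, 0 ≤ Δ a) (D : Finset α)
    (fstar : Finset α → ℝ)
    (hsens : ∀ (D' : Finset α) (a : α), a ∉ D' → insert a D' ⊆ D →
      |fstar (insert a D') - fstar D'| ≤ Δ a) :
    D.powerset.sup' (Finset.powerset_nonempty D) (fun D' => |f D' - SPF f Δ D'|)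
      ≤ 2 * D.powerset.sup' (Finset.powerset_nonempty D) (fun D' => |f D' - fstar D'|) := by
  set M := D.powerset.sup' (Finset.powerset_nonempty D) (fun D' => |f D' - fstar D'|) with hMdef
  have hM : ∀ D' ⊆ D, |f D' - fstar D'| ≤ M := by
    intro D' h
    exact Finset.le_sup' (fun D' => |f D' - fstar D'|) (Finset.mem_powerset.mpr h)
  have key : ∀ D' : Finset α, D' ⊆ D → |SPF f Δ D' - fstar D'| ≤ M := by
    intro D'
    induction D' using Finset.strongInduction with
    | _ D' ih =>
      intro hsub
      rw [SPF]
      by_cases h : D'.Nonempty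
      · simp only [dif_pos h]
        set U : ℝ := D'.attach.inf' (Finset.attach_nonempty_iff.mpr h)
          (fun a => SPF f Δ (D'.erase a.1) + Δ a.1) with hUdef
        set L : ℝ := D'.attach.sup' (Finset.attach_nonempty_iff.mpr h)
          (fun a => SPF f Δ (D'.erase a.1) - Δ a.1) with hLdef
        have hstar : ∀ a ∈ D', |fstar D' - fstar (D'.erase a)| ≤ Δ a := by
          intro a ha
          have h1 : a ∉ D'.erase a := Finset.notMem_erase a D'
          have h2 : insert a (D'.erase a) = D' := Finset.insert_erase ha
          have := hsens (D'.erase a) a h1 (by rw [h2]; exact hsub)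
          rwa [h2] at this
        have hih : ∀ a ∈ D', |SPF f Δ (D'.erase a) - fstar (D'.erase a)| ≤ M := by
          intro a ha
          exact ih (D'.erase a) (Finset.erase_ssubset ha)
            (le_trans (Finset.erase_subset a D') hsub)
        have hU_ge : fstar D' - M ≤ U := by
          rw [hUdef]
          apply Finset.le_inf'
          rintro ⟨a, ha⟩ -
          have h1 := abs_le.mp (hstar a ha)
          have h2 := abs_le.mp (hih a ha)
          linarith [h1.1, h1.2, h2.1, h2.2]
        have hL_le : L ≤ fstar D' + M := by
          rw [hLdef]
          apply Finset.sup'_le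
          rintro ⟨a, ha⟩ -
          have h1 := abs_le.mp (hstar a ha)
          have h2 := abs_le.mp (hih a ha)
          linarith [h1.1, h1.2, h2.1, h2.2]
        have hf := abs_le.mp (hM D' hsub)
        split_ifs with h1 h2
        · exact abs_le.mpr ⟨by linarith, by linarith [hf.2]⟩
        · exact abs_le.mpr ⟨by linarith [hf.1], by linarith⟩
        · exact abs_le.mpr hf
      · simp only [dif_neg h]
        rw [Finset.not_nonempty_iff_eq_empty.mp h]
        exact hM ∅ (Finset.empty_subset D)
  apply Finset.sup'_le
  intro D' hD'
  have hsub := Finset.mem_powerset.mp hD'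
  have h1 := hM D' hsub
  have h2 := key D' hsub
  calc |f D' - SPF f Δ D'| ≤ |f D' - fstar D'| + |fstar D' - SPF f Δ D'| := by
        have := abs_sub_le (f D') (fstar D') (SPF f Δ D')
        linarith
    _ ≤ M + M := by
        have h3 : |fstar D' - SPF f Δ D'| = |SPF f Δ D' - fstar D'| := abs_sub_comm _ _
        linarith
    _ = 2 * M := by ring
end

section
/- Let g be the Sensitivity-Preprocessing Function of f: 𝒟 → ℝ with parameters {Δ_i}. Then g is Pareto optimal: for any function h: 𝒟 → ℝ with individual sensitivity at most Δ_i for every i, if there exists D ∈ 𝒟 with |f(D) − h(D)| < |f(D) − g(D)|, then there exists D' ∈ 𝒟 with |f(D') − h(D')| > |f(D') − g(D')|. -/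
variable {α : Type*} [DecidableEq α]

lemma SPF_empty (f : Finset α → ℝ) (Δ : α → ℝ) : SPF f Δ ∅ = f ∅ := by
  rw [SPF]; simp

lemma SPF_of_nonempty (f : Finset α → ℝ) (Δ : α → ℝ) (D : Finset α) (hne : D.Nonempty) :
    SPF f Δ D = if D.attach.inf' (Finset.attach_nonempty_iff.mpr hne)
      (fun a => SPF f Δ (D.erase a.1) + Δ a.1) ≤ f D then
      D.attach.inf' (Finset.attach_nonempty_iff.mpr hne)
      (fun a => SPF f Δ (D.erase a.1) + Δ a.1)
    else if f D ≤ D.attach.sup' (Finset.attach_nonempty_iff.mpr hne)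
      (fun a => SPF f Δ (D.erase a.1) - Δ a.1) then
      D.attach.sup' (Finset.attach_nonempty_iff.mpr hne)
      (fun a => SPF f Δ (D.erase a.1) - Δ a.1)
    else f D := by
  rw [SPF]; simp [hne]

lemma spf_aux_lt (f : Finset α → ℝ) (Δ : α → ℝ) (h : Finset α → ℝ)
    (hsens : ∀ (D : Finset α) (a : α), a ∉ D → |h (insert a D) - h D| ≤ Δ a)
    (D : Finset α) (hg : SPF f Δ D < h D) :
    ∃ D' : Finset α, |f D' - SPF f Δ D'| < |f D' - h D'| := by
  induction D using Finset.strongInduction with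
  | _ D ih =>
  by_cases hfg : f D ≤ SPF f Δ D
  · refine ⟨D, ?_⟩
    have h1 : |f D - SPF f Δ D| = SPF f Δ D - f D := by
      rw [abs_sub_comm]; exact abs_of_nonneg (by linarith)
    have h2 : h D - f D ≤ |f D - h D| := by
      rw [abs_sub_comm]; exact le_abs_self _
    linarith
  push_neg at hfg
  have hne : D.Nonempty := by
    rcases D.eq_empty_or_nonempty with rfl | hne
    · rw [SPF_empty] at hfg; linarith
    · exact hne
  set U := D.attach.inf' (Finset.attach_nonempty_iff.mpr hne)
      (fun a => SPF f Δ (D.erase a.1) + Δ a.1) with hUdef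
  set L := D.attach.sup' (Finset.attach_nonempty_iff.mpr hne)
      (fun a => SPF f Δ (D.erase a.1) - Δ a.1) with hLdef
  have heq := SPF_of_nonempty f Δ D hne
  rw [← hUdef, ← hLdef] at heq
  have hgU : SPF f Δ D = U := by
    by_cases hU : U ≤ f D
    · rw [heq, if_pos hU]
    · rw [heq, if_neg hU] at hfg
      by_cases hL : f D ≤ L
      · rw [if_pos hL] at hfg; linarith
      · rw [if_neg hL] at hfg; linarith
  obtain ⟨a, ha, hUa⟩ := Finset.exists_mem_eq_inf' (Finset.attach_nonempty_iff.mpr hne)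
    (fun a : {x // x ∈ D} => SPF f Δ (D.erase a.1) + Δ a.1)
  have hsa : |h D - h (D.erase a.1)| ≤ Δ a.1 := by
    have := hsens (D.erase a.1) a.1 (Finset.notMem_erase _ _)
    rwa [Finset.insert_erase a.2] at this
  have hrec : SPF f Δ (D.erase a.1) < h (D.erase a.1) := by
    have h1 : h D - h (D.erase a.1) ≤ Δ a.1 := (abs_le.mp hsa).2
    have h2 : SPF f Δ D = SPF f Δ (D.erase a.1) + Δ a.1 := hgU.trans hUa
    linarith
  exact ih (D.erase a.1) (Finset.erase_ssubset a.2) hrec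

lemma spf_aux_gt (f : Finset α → ℝ) (Δ : α → ℝ) (h : Finset α → ℝ)
    (hsens : ∀ (D : Finset α) (a : α), a ∉ D → |h (insert a D) - h D| ≤ Δ a)
    (D : Finset α) (hg : h D < SPF f Δ D) :
    ∃ D' : Finset α, |f D' - SPF f Δ D'| < |f D' - h D'| := by
  induction D using Finset.strongInduction with
  | _ D ih =>
  by_cases hfg : SPF f Δ D ≤ f D
  · refine ⟨D, ?_⟩
    have h1 : |f D - SPF f Δ D| = f D - SPF f Δ D := abs_of_nonneg (by linarith)
    have h2 : f D - h D ≤ |f D - h D| := le_abs_self _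
    linarith
  push_neg at hfg
  have hne : D.Nonempty := by
    rcases D.eq_empty_or_nonempty with rfl | hne
    · rw [SPF_empty] at hfg; linarith
    · exact hne
  set U := D.attach.inf' (Finset.attach_nonempty_iff.mpr hne)
      (fun a => SPF f Δ (D.erase a.1) + Δ a.1) with hUdef
  set L := D.attach.sup' (Finset.attach_nonempty_iff.mpr hne)
      (fun a => SPF f Δ (D.erase a.1) - Δ a.1) with hLdef
  have heq := SPF_of_nonempty f Δ D hne
  rw [← hUdef, ← hLdef] at heq
  have hgL : SPF f Δ D = L := by
    by_cases hU : U ≤ f D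
    · rw [heq, if_pos hU] at hfg ⊢; linarith
    · by_cases hL : f D ≤ L
      · rw [heq, if_neg hU, if_pos hL]
      · rw [heq, if_neg hU, if_neg hL] at hfg; linarith
  obtain ⟨a, ha, hLa⟩ := Finset.exists_mem_eq_sup' (Finset.attach_nonempty_iff.mpr hne)
    (fun a : {x // x ∈ D} => SPF f Δ (D.erase a.1) - Δ a.1)
  have hsa : |h D - h (D.erase a.1)| ≤ Δ a.1 := by
    have := hsens (D.erase a.1) a.1 (Finset.notMem_erase _ _)
    rwa [Finset.insert_erase a.2] at this
  have hrec : h (D.erase a.1) < SPF f Δ (D.erase a.1) := by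
    have h1 : -(Δ a.1) ≤ h D - h (D.erase a.1) := (abs_le.mp hsa).1
    have h2 : SPF f Δ D = SPF f Δ (D.erase a.1) - Δ a.1 := hgL.trans hLa
    linarith
  exact ih (D.erase a.1) (Finset.erase_ssubset a.2) hrec


/-- Pareto optimality of the Sensitivity-Preprocessing Function: any
`{Δ}`-sensitivity-bounded `h` that beats `g` on some database must lose to `g`
on another database. -/
theorem stmt15 (f : Finset α → ℝ) (Δ : α → ℝ) (hΔ : ∀ a, 0 ≤ Δ a)
    (h : Finset α → ℝ)
    (hsens : ∀ (D : Finset α) (a : α), a ∉ D → |h (insert a D) - h D| ≤ Δ a)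
    (hex : ∃ D : Finset α, |f D - h D| < |f D - SPF f Δ D|) :
    ∃ D' : Finset α, |f D' - SPF f Δ D'| < |f D' - h D'| := by
  obtain ⟨D, hD⟩ := hex
  rcases lt_trichotomy (SPF f Δ D) (f D) with hlt | heq | hgt
  · have hfg : |f D - SPF f Δ D| = f D - SPF f Δ D := abs_of_nonneg (by linarith)
    have hhg : SPF f Δ D < h D := by
      by_contra hc
      push_neg at hc
      have : f D - h D ≤ |f D - h D| := le_abs_self _
      linarith
    exact spf_aux_lt f Δ h hsens D hhg
  · rw [heq] at hD; simp at hD; linarith [abs_nonneg (f D - h D)]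
  · have hfg : |f D - SPF f Δ D| = SPF f Δ D - f D := by
      rw [abs_sub_comm]; exact abs_of_nonneg (by linarith)
    have hhg : h D < SPF f Δ D := by
      by_contra hc
      push_neg at hc
      have : h D - f D ≤ |f D - h D| := by rw [abs_sub_comm]; exact le_abs_self _
      linarith
    exact spf_aux_gt f Δ h hsens D hhg
end

section
/- Let g be the Sensitivity-Preprocessing Function of variance with parameter Δ ≥ 0 and g(∅) = 0. Then for every database D of n reals, there exists a subset D' ⊆ D with |D'| = k such that g(D) = Var(D') + (n − k)Δ. -/
variable {α : Type*} [DecidableEq α]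

/- ===== auxiliary lemmas ===== -/

lemma mVar_nonneg (s : Multiset ℝ) : 0 ≤ mVar s := by
  apply div_nonneg
  · apply Multiset.sum_nonneg
    intro x hx
    obtain ⟨y, _, rfl⟩ := Multiset.mem_map.mp hx
    positivity
  · positivity

lemma sum_sq_eq (s : Multiset ℝ) (c : ℝ) :
    (s.map (fun y => (y - c) ^ 2)).sum
      = (s.map (fun y => (y - mMean s) ^ 2)).sum
        + (Multiset.card s : ℝ) * (mMean s - c) ^ 2 := by
  rcases eq_or_ne s 0 with rfl | hs
  · simp
  · have hn : (Multiset.card s : ℝ) ≠ 0 := by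
      simpa using (Multiset.card_pos.mpr hs).ne'
    set μ := mMean s with hμ
    have hsum : s.sum = (Multiset.card s : ℝ) * μ := by
      rw [hμ]; unfold mMean; field_simp
    have h1 : (s.map (fun y => (y - c) ^ 2)).sum
        = (s.map (fun y => (y - μ) ^ 2 + ((2 * (μ - c)) * y + (c ^ 2 - μ ^ 2)))).sum := by
      congr 1; apply Multiset.map_congr rfl; intro y _; ring
    rw [h1, Multiset.sum_map_add, Multiset.sum_map_add, Multiset.sum_map_mul_left]
    have h2 : (s.map (fun _ => c ^ 2 - μ ^ 2)).sum
        = (Multiset.card s : ℝ) * (c ^ 2 - μ ^ 2) := by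
      rw [Multiset.map_const', Multiset.sum_replicate, nsmul_eq_mul]
    rw [h2]
    have h3 : (s.map (fun y => y)).sum = s.sum := by simp
    rw [h3, hsum]; ring

lemma sum_sq_mean_le (s : Multiset ℝ) (c : ℝ) :
    (s.map (fun y => (y - mMean s) ^ 2)).sum ≤ (s.map (fun y => (y - c) ^ 2)).sum := by
  rw [sum_sq_eq s c]
  nlinarith [sq_nonneg (mMean s - c),
    (Nat.cast_nonneg (Multiset.card s) : (0:ℝ) ≤ (Multiset.card s : ℝ))]

lemma card_mul_mVar_cons_le (s : Multiset ℝ) (x : ℝ) :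
    (Multiset.card s : ℝ) * mVar s ≤ ((Multiset.card s : ℝ) + 1) * mVar (x ::ₘ s) := by
  rcases eq_or_ne s 0 with rfl | hs
  · simp [mVar_nonneg, mVar, mMean]
  have hn : (0:ℝ) < (Multiset.card s : ℝ) := by
    simpa using Multiset.card_pos.mpr hs
  set μ' := mMean (x ::ₘ s) with hμ'
  have h0 : (Multiset.card s : ℝ) * mVar s
      = (s.map (fun y => (y - mMean s) ^ 2)).sum := by
    unfold mVar; field_simp
  have h1 : ((Multiset.card s : ℝ) + 1) * mVar (x ::ₘ s)
      = ((x ::ₘ s).map (fun y => (y - μ') ^ 2)).sum := by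
    unfold mVar
    rw [← hμ']
    have : (Multiset.card (x ::ₘ s) : ℝ) = (Multiset.card s : ℝ) + 1 := by simp
    rw [this]; field_simp
  rw [h0, h1, Multiset.map_cons, Multiset.sum_cons]
  have := sum_sq_mean_le s μ'
  nlinarith [sq_nonneg (x - μ')]

noncomputable def gSPF {α : Type*} [DecidableEq α] (val : α → ℝ) (Δ : ℝ) : Finset α → ℝ :=
  SPF (fun E => mVar (E.val.map val)) (fun _ => Δ)

noncomputable def fVar {α : Type*} [DecidableEq α] (val : α → ℝ) (D : Finset α) : ℝ :=
  mVar (D.val.map val)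

lemma fVar_nonneg (val : α → ℝ) (D : Finset α) : 0 ≤ fVar val D := mVar_nonneg _

lemma gSPF_empty (val : α → ℝ) (Δ : ℝ) : gSPF val Δ (∅ : Finset α) = 0 := by
  unfold gSPF
  rw [SPF]
  simp [mVar, mMean]

lemma fVar_empty (val : α → ℝ) : fVar val (∅ : Finset α) = 0 := by
  simp [fVar, mVar, mMean]

lemma gSPF_ite (val : α → ℝ) (Δ : ℝ) (D : Finset α) (h : D.Nonempty) :
    gSPF val Δ D =
      if (D.attach.inf' (Finset.attach_nonempty_iff.mpr h)
            (fun a => gSPF val Δ (D.erase a.1) + Δ)) ≤ fVar val D then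
        D.attach.inf' (Finset.attach_nonempty_iff.mpr h)
            (fun a => gSPF val Δ (D.erase a.1) + Δ)
      else if fVar val D ≤ D.attach.sup' (Finset.attach_nonempty_iff.mpr h)
            (fun a => gSPF val Δ (D.erase a.1) - Δ) then
        D.attach.sup' (Finset.attach_nonempty_iff.mpr h)
            (fun a => gSPF val Δ (D.erase a.1) - Δ)
      else fVar val D := by
  unfold gSPF fVar
  rw [SPF]
  simp only [dif_pos h]

lemma gSPF_lip (val : α → ℝ) (Δ : ℝ) (hΔ : 0 ≤ Δ) :
    ∀ (n : ℕ) (D : Finset α), D.card ≤ n → ∀ a ∈ D,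
      gSPF val Δ D ≤ gSPF val Δ (D.erase a) + Δ ∧
      gSPF val Δ (D.erase a) ≤ gSPF val Δ D + Δ := by
  intro n
  induction n with
  | zero =>
    intro D hD a ha
    rw [Nat.le_zero, Finset.card_eq_zero] at hD
    subst hD
    simp at ha
  | succ n ih =>
    intro D hD a ha
    have hne : D.Nonempty := ⟨a, ha⟩
    have H := Finset.attach_nonempty_iff.mpr hne
    set U : ℝ := D.attach.inf' H (fun x => gSPF val Δ (D.erase x.1) + Δ) with hUdef
    set L : ℝ := D.attach.sup' H (fun x => gSPF val Δ (D.erase x.1) - Δ) with hLdef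
    have hLU : L ≤ U := by
      rw [hLdef]
      apply Finset.sup'_le
      intro b _
      rw [hUdef]
      apply Finset.le_inf'
      intro c _
      by_cases hbc : b.1 = c.1
      · rw [hbc]; linarith
      · have hcb : c.1 ∈ D.erase b.1 := Finset.mem_erase.mpr ⟨fun h => hbc h.symm, c.2⟩
        have hbc' : b.1 ∈ D.erase c.1 := Finset.mem_erase.mpr ⟨hbc, b.2⟩
        have hcard : (D.erase b.1).card ≤ n := by
          rw [Finset.card_erase_of_mem b.2]; omega
        have hcard' : (D.erase c.1).card ≤ n := by
          rw [Finset.card_erase_of_mem c.2]; omega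
        have h1 := (ih (D.erase b.1) hcard c.1 hcb).1
        have h2 := (ih (D.erase c.1) hcard' b.1 hbc').2
        rw [Finset.erase_right_comm] at h1
        linarith
    have hsw : L ≤ gSPF val Δ D ∧ gSPF val Δ D ≤ U := by
      rw [gSPF_ite val Δ D hne]
      rw [← hUdef, ← hLdef]
      split_ifs with h1 h2
      · exact ⟨hLU, le_rfl⟩
      · exact ⟨le_rfl, hLU⟩
      · exact ⟨(not_le.mp h2).le, (not_le.mp h1).le⟩
    constructor
    · calc gSPF val Δ D ≤ U := hsw.2
        _ ≤ gSPF val Δ (D.erase a) + Δ :=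
          Finset.inf'_le _ (Finset.mem_attach _ ⟨a, ha⟩)
    · have : gSPF val Δ (D.erase a) - Δ ≤ L :=
        Finset.le_sup' (fun x : {x // x ∈ D} => gSPF val Δ (D.erase x.1) - Δ)
          (Finset.mem_attach _ ⟨a, ha⟩)
      linarith [hsw.1]

lemma gSPF_le_card (val : α → ℝ) (Δ : ℝ) (hΔ : 0 ≤ Δ) :
    ∀ (n : ℕ) (D : Finset α), D.card ≤ n → gSPF val Δ D ≤ (D.card : ℝ) * Δ := by
  intro n
  induction n with
  | zero =>
    intro D hD
    rw [Nat.le_zero, Finset.card_eq_zero] at hD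
    subst hD
    simp [gSPF_empty]
  | succ n ih =>
    intro D hD
    rcases D.eq_empty_or_nonempty with rfl | ⟨a, ha⟩
    · simp [gSPF_empty]
    · have h1 := (gSPF_lip val Δ hΔ D.card D le_rfl a ha).1
      have hcd : (D.erase a).card ≤ n := by
        rw [Finset.card_erase_of_mem ha]; omega
      have h2 := ih (D.erase a) hcd
      have hc : ((D.erase a).card : ℝ) + 1 = (D.card : ℝ) := by
        have hpos : 1 ≤ D.card := Finset.card_pos.mpr ⟨a, ha⟩
        rw [Finset.card_erase_of_mem ha]
        push_cast [Nat.cast_sub hpos]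
        ring
      nlinarith

lemma gSPF_le_fVar (val : α → ℝ) (Δ : ℝ) (hΔ : 0 ≤ Δ) :
    ∀ (n : ℕ) (D : Finset α), D.card ≤ n → gSPF val Δ D ≤ fVar val D := by
  intro n
  induction n with
  | zero =>
    intro D hD
    rw [Nat.le_zero, Finset.card_eq_zero] at hD
    subst hD
    rw [gSPF_empty, fVar_empty]
  | succ n ih =>
    intro D hD
    rcases D.eq_empty_or_nonempty with rfl | hne
    · rw [gSPF_empty, fVar_empty]
    · rw [gSPF_ite val Δ D hne]
      split_ifs with h1 h2
      · exact h1
      · -- show L ≤ fVar val D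
        apply Finset.sup'_le
        intro b _
        have hb : b.1 ∈ D := b.2
        have key : gSPF val Δ (D.erase b.1) ≤ fVar val D + Δ := by
          rcases (D.erase b.1).eq_empty_or_nonempty with he | hne'
          · rw [he, gSPF_empty]
            have := fVar_nonneg val D
            linarith
          · have hcd : (D.erase b.1).card ≤ n := by
              rw [Finset.card_erase_of_mem hb]
              have := Finset.card_pos.mpr hne
              omega
            by_cases hc : fVar val (D.erase b.1) ≤ fVar val D + Δ
            · exact le_trans (ih _ hcd) hc
            · push_neg at hc
              -- key variance inequality
              have hcons : (D.val.map val)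
                  = val b.1 ::ₘ ((D.erase b.1).val.map val) := by
                rw [Finset.erase_val]
                rw [← Multiset.map_cons]
                congr 1
                exact (Multiset.cons_erase (by simpa using hb)).symm
              have hK := card_mul_mVar_cons_le ((D.erase b.1).val.map val) (val b.1)
              have hcard_eq : (Multiset.card ((D.erase b.1).val.map val) : ℝ)
                  = ((D.erase b.1).card : ℝ) := by
                rw [Multiset.card_map]
                rfl
              rw [hcard_eq, ← hcons] at hK
              -- hK : k * fVar(erase) ≤ (k+1) * fVar D, with fVar defs
              have hK' : ((D.erase b.1).card : ℝ) * fVar val (D.erase b.1)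
                  ≤ (((D.erase b.1).card : ℝ) + 1) * fVar val D := hK
              have hk1 : (1:ℝ) ≤ ((D.erase b.1).card : ℝ) := by
                exact_mod_cast Finset.card_pos.mpr hne'
              have hg2 := gSPF_le_card val Δ hΔ (D.erase b.1).card (D.erase b.1) le_rfl
              -- from hc : fVar D + Δ < fVar (erase): k Δ < fVar D
              have hmul : ((D.erase b.1).card : ℝ) * (fVar val D + Δ)
                  < ((D.erase b.1).card : ℝ) * fVar val (D.erase b.1) :=
                mul_lt_mul_of_pos_left hc (by linarith)
              nlinarith
        linarith
      · exact le_rfl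

lemma gSPF_struct (val : α → ℝ) (Δ : ℝ) (hΔ : 0 ≤ Δ) :
    ∀ (n : ℕ) (D : Finset α), D.card ≤ n →
      ∃ D' : Finset α, D' ⊆ D ∧
        gSPF val Δ D = fVar val D' + ((D.card - D'.card : ℕ) : ℝ) * Δ := by
  intro n
  induction n with
  | zero =>
    intro D hD
    rw [Nat.le_zero, Finset.card_eq_zero] at hD
    subst hD
    exact ⟨∅, Finset.Subset.refl _, by simp [gSPF_empty, fVar_empty]⟩
  | succ n ih =>
    intro D hD
    rcases D.eq_empty_or_nonempty with rfl | hne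
    · exact ⟨∅, Finset.Subset.refl _, by simp [gSPF_empty, fVar_empty]⟩
    · have hself : gSPF val Δ D = fVar val D →
          ∃ D' : Finset α, D' ⊆ D ∧
            gSPF val Δ D = fVar val D' + ((D.card - D'.card : ℕ) : ℝ) * Δ := by
        intro h
        exact ⟨D, Finset.Subset.refl _, by simp [h]⟩
      have hite := gSPF_ite val Δ D hne
      rw [hite]
      rw [hite] at hself
      split_ifs with h1 h2
      · -- g D = U
        obtain ⟨x, _, hxeq⟩ := Finset.exists_mem_eq_inf'
          (Finset.attach_nonempty_iff.mpr hne)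
          (fun a : {x // x ∈ D} => gSPF val Δ (D.erase a.1) + Δ)
        have hcd : (D.erase x.1).card ≤ n := by
          rw [Finset.card_erase_of_mem x.2]
          have := Finset.card_pos.mpr hne
          omega
        obtain ⟨S, hS, hEq⟩ := ih (D.erase x.1) hcd
        refine ⟨S, hS.trans (Finset.erase_subset _ _), ?_⟩
        rw [hxeq, hEq]
        have hk : S.card ≤ (D.erase x.1).card := Finset.card_le_card hS
        have hce : (D.erase x.1).card = D.card - 1 := Finset.card_erase_of_mem x.2
        have hpos : 1 ≤ D.card := Finset.card_pos.mpr hne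
        have hnat : (D.erase x.1).card - S.card + 1 = D.card - S.card := by omega
        have hcast : ((D.card - S.card : ℕ) : ℝ)
            = (((D.erase x.1).card - S.card : ℕ) : ℝ) + 1 := by
          rw [← hnat]
          push_cast
          ring
        rw [hcast]
        ring
      · -- g D = L and L = fVar D
        have hle := gSPF_le_fVar val Δ hΔ D.card D le_rfl
        rw [hite] at hle
        rw [if_neg h1, if_pos h2] at hle
        have hLf : (D.attach.sup' (Finset.attach_nonempty_iff.mpr hne)
            (fun a => gSPF val Δ (D.erase a.1) - Δ)) = fVar val D :=
          le_antisymm hle h2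
        exact ⟨D, Finset.Subset.refl _, by rw [hLf]; simp⟩
      · exact ⟨D, Finset.Subset.refl _, by simp⟩


/-- For the Sensitivity-Preprocessing Function of variance with parameter `Δ`
(and `g ∅ = 0`), `g D = Var D' + (n − k)·Δ` for some subset `D' ⊆ D` of size
`k`, where `n` is the size of `D`. -/
theorem stmt17 (val : α → ℝ) (Δ : ℝ) (hΔ : 0 ≤ Δ) (D : Finset α) :
    ∃ D' : Finset α, D' ⊆ D ∧
      SPF (fun E => mVar (E.val.map val)) (fun _ => Δ) D
        = mVar (D'.val.map val) + ((D.card - D'.card : ℕ) : ℝ) * Δ := by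
  have h := gSPF_struct val Δ hΔ D.card D le_rfl
  obtain ⟨D', hsub, heq⟩ := h
  exact ⟨D', hsub, heq⟩
end

section
/- Let g: ℝ^{<ℕ} → ℝ be the Sensitivity-Preprocessing Function of the mean function with parameters μ̂ (value of g at the empty set) and Δ ≥ 0. If every entry of a database D = (x_1,...,x_n) satisfies x_i ∈ [μ̂ − (n/2)Δ, μ̂ + (n/2)Δ], then g(D) = μ(D), i.e., g agrees exactly with the mean on D. -/
variable {α : Type*} [DecidableEq α]

omit [DecidableEq α] in
lemma mMean_eq (val : α → ℝ) (S : Finset α) :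
    mMean (S.val.map val) = (∑ a ∈ S, val a) / (S.card : ℝ) := by
  rw [mMean, Multiset.card_map]
  rfl

lemma spf_key (val : α → ℝ) (μhat Δ : ℝ) (hΔ : 0 ≤ Δ) (D : Finset α)
    (hrange : ∀ a ∈ D, μhat - (D.card : ℝ) / 2 * Δ ≤ val a ∧
      val a ≤ μhat + (D.card : ℝ) / 2 * Δ) :
    ∀ S : Finset α, S ⊆ D →
      ((∑ a ∈ S, val a) + ((D.card : ℝ) - S.card) * (μhat + (D.card : ℝ) / 2 * Δ)
          - (D.card : ℝ) * ((D.card : ℝ) - S.card) * Δ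
        ≤ (D.card : ℝ) *
          SPF (fun E => if E = ∅ then μhat else mMean (E.val.map val)) (fun _ => Δ) S)
      ∧ ((D.card : ℝ) *
          SPF (fun E => if E = ∅ then μhat else mMean (E.val.map val)) (fun _ => Δ) S
        ≤ (∑ a ∈ S, val a) + ((D.card : ℝ) - S.card) * (μhat - (D.card : ℝ) / 2 * Δ)
          + (D.card : ℝ) * ((D.card : ℝ) - S.card) * Δ) := by
  intro S
  induction S using Finset.strongInduction with
  | _ S ih =>
    intro hSD
    set n : ℝ := (D.card : ℝ) with hn
    by_cases hS : S.Nonempty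
    · have hne : S ≠ ∅ := Finset.nonempty_iff_ne_empty.mp hS
      have hm1 : (1 : ℝ) ≤ (S.card : ℝ) := by
        exact_mod_cast Nat.one_le_iff_ne_zero.mpr (by simpa [Finset.card_eq_zero] using hne)
      have hmn : (S.card : ℝ) ≤ n := by
        show (S.card : ℝ) ≤ (D.card : ℝ)
        exact_mod_cast Finset.card_le_card hSD
      have hn0 : (0 : ℝ) < n := lt_of_lt_of_le one_pos (le_trans hm1 hmn)
      have hm0 : (0 : ℝ) < (S.card : ℝ) := lt_of_lt_of_le one_pos hm1
      set m : ℝ := (S.card : ℝ) with hmdef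
      -- bounds on the sum
      have hsum_lo : m * (μhat - n / 2 * Δ) ≤ ∑ a ∈ S, val a := by
        have := Finset.card_nsmul_le_sum S val (μhat - n / 2 * Δ)
          (fun a ha => (hrange a (hSD ha)).1)
        rw [nsmul_eq_mul] at this
        exact this
      have hsum_hi : (∑ a ∈ S, val a) ≤ m * (μhat + n / 2 * Δ) := by
        have := Finset.sum_le_card_nsmul S val (μhat + n / 2 * Δ)
          (fun a ha => (hrange a (hSD ha)).2)
        rw [nsmul_eq_mul] at this
        exact this
      -- key inequalities for the mean case
      have keyLow : (∑ a ∈ S, val a) + (n - m) * (μhat + n / 2 * Δ) - n * (n - m) * Δ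
          ≤ n * ((∑ a ∈ S, val a) / m) := by
        rw [mul_div_assoc' n _ m, le_div_iff₀ hm0]
        nlinarith [mul_nonneg (by linarith : (0:ℝ) ≤ n - m)
          (by linarith : (0:ℝ) ≤ (∑ a ∈ S, val a) - m * (μhat - n / 2 * Δ))]
      have keyHigh : n * ((∑ a ∈ S, val a) / m)
          ≤ (∑ a ∈ S, val a) + (n - m) * (μhat - n / 2 * Δ) + n * (n - m) * Δ := by
        rw [mul_div_assoc' n _ m, div_le_iff₀ hm0]
        nlinarith [mul_nonneg (by linarith : (0:ℝ) ≤ n - m)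
          (by linarith : (0:ℝ) ≤ m * (μhat + n / 2 * Δ) - ∑ a ∈ S, val a)]
      -- per-element bounds from the induction hypothesis
      have ihLow : ∀ a ∈ S,
          (∑ x ∈ S, val x) + (n - m) * (μhat + n / 2 * Δ) - n * (n - m) * Δ
            ≤ n * (SPF (fun E => if E = ∅ then μhat else mMean (E.val.map val))
                (fun _ => Δ) (S.erase a) + Δ) := by
        intro a ha
        have h3 := (ih (S.erase a) (Finset.erase_ssubset ha)
          ((Finset.erase_subset a S).trans hSD)).1
        have hca : ((S.erase a).card : ℝ) = m - 1 := by
          rw [Finset.card_erase_of_mem ha]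
          have h1c : (1:ℕ) ≤ S.card := Finset.card_pos.mpr hS
          push_cast [h1c]
          ring
        have hsub : (∑ x ∈ S.erase a, val x) = (∑ x ∈ S, val x) - val a := by
          rw [eq_sub_iff_add_eq, Finset.sum_erase_add S val ha]
        rw [hca, hsub] at h3
        have hva := (hrange a (hSD ha)).2
        nlinarith [h3]
      have ihHigh : ∀ a ∈ S,
          n * (SPF (fun E => if E = ∅ then μhat else mMean (E.val.map val))
              (fun _ => Δ) (S.erase a) - Δ)
            ≤ (∑ x ∈ S, val x) + (n - m) * (μhat - n / 2 * Δ) + n * (n - m) * Δ := by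
        intro a ha
        have h3 := (ih (S.erase a) (Finset.erase_ssubset ha)
          ((Finset.erase_subset a S).trans hSD)).2
        have hca : ((S.erase a).card : ℝ) = m - 1 := by
          rw [Finset.card_erase_of_mem ha]
          have h1c : (1:ℕ) ≤ S.card := Finset.card_pos.mpr hS
          push_cast [h1c]
          ring
        have hsub : (∑ x ∈ S.erase a, val x) = (∑ x ∈ S, val x) - val a := by
          rw [eq_sub_iff_add_eq, Finset.sum_erase_add S val ha]
        rw [hca, hsub] at h3
        have hva := (hrange a (hSD ha)).1
        nlinarith [h3]
      -- unfold SPF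
      rw [SPF]
      rw [dif_pos hS]
      simp only [if_neg hne, mMean_eq val S]
      split_ifs with h1 h2
      · constructor
        · -- lower bound for U = inf'
          have : ((∑ a ∈ S, val a) + (n - m) * (μhat + n / 2 * Δ) - n * (n - m) * Δ) / n
              ≤ S.attach.inf' (Finset.attach_nonempty_iff.mpr hS)
                (fun a => SPF (fun E => if E = ∅ then μhat else mMean (E.val.map val))
                  (fun _ => Δ) (S.erase a.1) + Δ) := by
            apply Finset.le_inf'
            intro b _
            rw [div_le_iff₀ hn0]
            have := ihLow b.1 b.2
            linarith
          rw [div_le_iff₀ hn0] at this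
          linarith
        · have hfU := mul_le_mul_of_nonneg_left h1 hn0.le
          calc n * _ ≤ n * ((∑ a ∈ S, val a) / (S.card:ℝ)) := hfU
            _ ≤ _ := keyHigh
      · constructor
        · have hfL := mul_le_mul_of_nonneg_left h2 hn0.le
          calc _ ≤ n * ((∑ a ∈ S, val a) / (S.card:ℝ)) := keyLow
            _ ≤ n * _ := hfL
        · -- upper bound for L = sup'
          have : S.attach.sup' (Finset.attach_nonempty_iff.mpr hS)
                (fun a => SPF (fun E => if E = ∅ then μhat else mMean (E.val.map val))
                  (fun _ => Δ) (S.erase a.1) - Δ)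
              ≤ ((∑ a ∈ S, val a) + (n - m) * (μhat - n / 2 * Δ) + n * (n - m) * Δ) / n := by
            apply Finset.sup'_le
            intro b _
            rw [le_div_iff₀ hn0]
            have := ihHigh b.1 b.2
            linarith
          rw [le_div_iff₀ hn0] at this
          linarith
      · exact ⟨keyLow, keyHigh⟩
    · -- S = ∅
      rw [Finset.not_nonempty_iff_eq_empty] at hS
      subst hS
      rw [SPF]
      simp only [Finset.not_nonempty_empty, dif_neg, if_pos rfl, if_true, eq_self_iff_true, Finset.sum_empty,
        Finset.card_empty, Nat.cast_zero, not_false_eq_true]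
      have hn0 : (0 : ℝ) ≤ n := Nat.cast_nonneg _
      constructor <;> nlinarith [mul_nonneg (mul_nonneg hn0 hn0) hΔ]

/-- If every entry of `D` lies in `[μ̂ − (n/2)Δ, μ̂ + (n/2)Δ]` (with `n = |D|`),
then the Sensitivity-Preprocessing Function of the mean (initialized with
`g ∅ = μ̂`) agrees exactly with the mean on `D`. -/
theorem stmt18 (val : α → ℝ) (μhat Δ : ℝ) (hΔ : 0 ≤ Δ) (D : Finset α)
    (hD : D.Nonempty)
    (hrange : ∀ a ∈ D, μhat - (D.card : ℝ) / 2 * Δ ≤ val a ∧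
      val a ≤ μhat + (D.card : ℝ) / 2 * Δ) :
    SPF (fun E => if E = ∅ then μhat else mMean (E.val.map val)) (fun _ => Δ) D
      = mMean (D.val.map val) := by
  obtain ⟨hlo, hhi⟩ := spf_key val μhat Δ hΔ D hrange D (le_refl D)
  have hn0 : (0 : ℝ) < (D.card : ℝ) := by
    exact_mod_cast Finset.card_pos.mpr hD
  have heq : (D.card : ℝ) *
      SPF (fun E => if E = ∅ then μhat else mMean (E.val.map val)) (fun _ => Δ) D
      = ∑ a ∈ D, val a := by
    have h1 : ((D.card : ℝ) - (D.card : ℝ)) = 0 := by ring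
    rw [h1] at hlo hhi
    simp only [zero_mul, mul_zero, add_zero, sub_zero] at hlo hhi
    linarith
  rw [mMean_eq]
  rw [eq_div_iff hn0.ne']
  linarith [heq]
end
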